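/- Let a > c and d > b (coordination game) and let δ satisfy 0 < δ < (d−b)/(a+d−b−c). Let φ : ℝ → ℝ be continuously differentiable with φ(x) < 0 for all x ∈ [0,δ) and φ(x) > 0 for all x ∈ (δ,1]. Then every solution (x, g) of the innovation-gain controlled replicator equation with x(0) ∈ [0,1) and g(0) > 0 satisfies x(t) → 0 and g(t) → 0 as t → ∞. -/

import Mathlib

/-!
Let `x* = (d - b) / (a + d - b - c) ∈ (δ, 1)` be the interior equilibrium. The gain, `x` and
`1 - x` all solve scalar linear equations `ḟ = ψ f` with continuous per-capita rate `ψ`, so each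
keeps its sign and grows or decays exponentially while `ψ` stays away from `0`. If `x` stayed
above `x*`, then `φ(x)` would be bounded below by `min φ > 0` on `[x*, 1]`, so `g → ∞`; once
`g ≥ a + d - b - c` the rate of `1 - x` is at least `x* (d - b)`, contradicting `1 - x ≤ 1`.
So `x(T) < r < x*` for some `T`; as `g > 0`, the vector field points downwards at `x = r`, hence
`x` stays below `r`, where its rate is negative, and `x → 0`. Then `φ(x) → φ(0) < 0` and `g → 0`.
-/

/-- `(x, g)` is a solution of the innovation-gain controlled replicator equation
(control matrix `G⁽³⁾`): `ẋ = x(1−x)((a+d−b−c)x + b − d − g·x)`, `ġ = φ(x) g`. -/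
def IsInnovationSolution (a b c d : ℝ) (φ : ℝ → ℝ) (x g : ℝ → ℝ) : Prop :=
  ∀ t : ℝ, 0 ≤ t →
    HasDerivAt x
      (x t * (1 - x t) * ((a + d - b - c) * x t + (b - d) - g t * x t)) t ∧
    HasDerivAt g (φ (x t) * g t) t

open Set Filter Topology Real

theorem eq_mul_exp_integral_of_hasDerivAt_mul {f ψ : ℝ → ℝ} {a : ℝ}
    (hψ : ContinuousOn ψ (Ici a)) (hf : ∀ t, a ≤ t → HasDerivAt f (ψ t * f t) t)
    {t : ℝ} (ht : a ≤ t) : f t = f a * exp (∫ u in a..t, ψ u) := by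
  set F : ℝ → ℝ := fun t => ∫ u in a..t, ψ u
  have hψI : ∀ u, a ≤ u → ContinuousOn ψ (uIcc a u) := fun u hu =>
    hψ.mono (by rw [uIcc_of_le hu]; exact Icc_subset_Ici_self)
  have hF : ∀ u, a ≤ u → HasDerivWithinAt F (ψ u) (Ici u) u := fun u hu =>
    intervalIntegral.integral_hasDerivWithinAt_right (hψI u hu).intervalIntegrable
      ((hψ.mono (Ioi_subset_Ici hu)).stronglyMeasurableAtFilter_nhdsWithin measurableSet_Ioi u)
      ((hψ u hu).mono (Ioi_subset_Ici hu))
  have hconst : ∀ u ∈ Icc a t, f u * exp (-F u) = f a * exp (-F a) := by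
    refine constant_of_has_deriv_right_zero ?_ (fun u hu => ?_)
    · refine ContinuousOn.mul (fun u hu => (hf u hu.1).continuousAt.continuousWithinAt) ?_
      refine (intervalIntegral.continuousOn_primitive_interval
        ((hψI t ht).integrableOn_compact isCompact_uIcc)).neg.rexp.mono ?_
      rw [uIcc_of_le ht]
    · have h : HasDerivWithinAt (fun y => f y * exp (-F y)) _ (Ici u) u :=
        (hf u hu.1).hasDerivWithinAt.mul (hF u hu.1).neg.exp
      exact h.congr_deriv (by simp only [Pi.neg_apply]; ring)
  have := hconst t ⟨ht, le_rfl⟩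
  simp only [F, intervalIntegral.integral_same, neg_zero, exp_zero, mul_one] at this
  rw [← this, mul_assoc, ← exp_add, neg_add_cancel, exp_zero, mul_one]

theorem pos_of_hasDerivAt_mul {f ψ : ℝ → ℝ} {a : ℝ} (hψ : ContinuousOn ψ (Ici a))
    (hf : ∀ t, a ≤ t → HasDerivAt f (ψ t * f t) t) (ha : 0 < f a) {t : ℝ} (ht : a ≤ t) :
    0 < f t := by
  rw [eq_mul_exp_integral_of_hasDerivAt_mul hψ hf ht]
  positivity

theorem nonneg_of_hasDerivAt_mul {f ψ : ℝ → ℝ} {a : ℝ} (hψ : ContinuousOn ψ (Ici a))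
    (hf : ∀ t, a ≤ t → HasDerivAt f (ψ t * f t) t) (ha : 0 ≤ f a) {t : ℝ} (ht : a ≤ t) :
    0 ≤ f t := by
  rw [eq_mul_exp_integral_of_hasDerivAt_mul hψ hf ht]
  positivity

theorem tendsto_integral_atTop_of_le {ψ : ℝ → ℝ} {a ε : ℝ} (hψ : ContinuousOn ψ (Ici a))
    (hε : 0 < ε) (h : ∀ t, a ≤ t → ε ≤ ψ t) :
    Tendsto (fun t => ∫ u in a..t, ψ u) atTop atTop := by
  refine tendsto_atTop_mono' atTop ?_
    ((tendsto_atTop_add_const_right _ (-a) tendsto_id).const_mul_atTop hε)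
  filter_upwards [eventually_ge_atTop a] with t ht
  calc ε * (t + -a) = ∫ _ in a..t, ε := by
        rw [intervalIntegral.integral_const, smul_eq_mul]; ring
    _ ≤ ∫ u in a..t, ψ u := intervalIntegral.integral_mono_on ht intervalIntegrable_const
        ((hψ.mono fun u hu => by rw [uIcc_of_le ht] at hu; exact hu.1).intervalIntegrable)
        fun u hu => h u hu.1

theorem tendsto_atTop_of_hasDerivAt_mul {f ψ : ℝ → ℝ} {a ε : ℝ} (hψ : ContinuousOn ψ (Ici a))
    (hf : ∀ t, a ≤ t → HasDerivAt f (ψ t * f t) t) (ha : 0 < f a) (hε : 0 < ε)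
    (h : ∀ t, a ≤ t → ε ≤ ψ t) : Tendsto f atTop atTop :=
  ((tendsto_exp_atTop.comp (tendsto_integral_atTop_of_le hψ hε h)).const_mul_atTop ha).congr'
    ((eventually_ge_atTop a).mono fun _ ht => (eq_mul_exp_integral_of_hasDerivAt_mul hψ hf ht).symm)

theorem tendsto_zero_of_hasDerivAt_mul {f ψ : ℝ → ℝ} {a ε : ℝ} (hψ : ContinuousOn ψ (Ici a))
    (hf : ∀ t, a ≤ t → HasDerivAt f (ψ t * f t) t) (hε : 0 < ε)
    (h : ∀ t, a ≤ t → ψ t ≤ -ε) : Tendsto f atTop (𝓝 0) := by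
  have hI : Tendsto (fun t => ∫ u in a..t, ψ u) atTop atBot := by
    simpa only [Function.comp_def, intervalIntegral.integral_neg, neg_neg] using
      tendsto_neg_atTop_atBot.comp (tendsto_integral_atTop_of_le (ψ := fun u => -ψ u) hψ.neg hε
        fun t ht => le_neg.2 (h t ht))
  simpa only [mul_zero] using ((tendsto_exp_atBot.comp hI).const_mul (f a)).congr'
    ((eventually_ge_atTop a).mono fun _ ht => (eq_mul_exp_integral_of_hasDerivAt_mul hψ hf ht).symm)

namespace IsInnovationSolution

variable {a b c d : ℝ} {φ x g : ℝ → ℝ}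

theorem continuousOn_state (hsol : IsInnovationSolution a b c d φ x g) :
    ContinuousOn x (Ici 0) :=
  fun t ht => (hsol t ht).1.continuousAt.continuousWithinAt

theorem continuousOn_gain (hsol : IsInnovationSolution a b c d φ x g) :
    ContinuousOn g (Ici 0) :=
  fun t ht => (hsol t ht).2.continuousAt.continuousWithinAt

theorem hasDerivAt_state (hsol : IsInnovationSolution a b c d φ x g) {t : ℝ} (ht : 0 ≤ t) :
    HasDerivAt x ((1 - x t) * ((a + d - b - c) * x t + (b - d) - g t * x t) * x t) t :=
  (hsol t ht).1.congr_deriv (by ring)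

theorem hasDerivAt_one_sub_state (hsol : IsInnovationSolution a b c d φ x g) {t : ℝ}
    (ht : 0 ≤ t) : HasDerivAt (fun t => 1 - x t)
      (-(x t * ((a + d - b - c) * x t + (b - d) - g t * x t)) * (1 - x t)) t :=
  ((hsol t ht).1.const_sub 1).congr_deriv (by ring)

theorem gain_pos (hsol : IsInnovationSolution a b c d φ x g) (hφ : Continuous φ)
    (hg0 : 0 < g 0) {t : ℝ} (ht : 0 ≤ t) : 0 < g t :=
  pos_of_hasDerivAt_mul (hφ.comp_continuousOn hsol.continuousOn_state)
    (fun t ht => (hsol t ht).2) hg0 ht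

theorem state_nonneg (hsol : IsInnovationSolution a b c d φ x g) (hx0 : 0 ≤ x 0) {t : ℝ}
    (ht : 0 ≤ t) : 0 ≤ x t := by
  have hx := hsol.continuousOn_state
  have hg := hsol.continuousOn_gain
  exact nonneg_of_hasDerivAt_mul (by fun_prop) (fun t ht => hsol.hasDerivAt_state ht) hx0 ht

theorem state_lt_one (hsol : IsInnovationSolution a b c d φ x g) (hx0 : x 0 < 1) {t : ℝ}
    (ht : 0 ≤ t) : x t < 1 := by
  have hx := hsol.continuousOn_state
  have hg := hsol.continuousOn_gain
  exact sub_pos.1 <| pos_of_hasDerivAt_mul (f := fun t => 1 - x t) (by fun_prop)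
    (fun t ht => hsol.hasDerivAt_one_sub_state ht) (sub_pos.2 hx0) ht

theorem state_le_of_le (hsol : IsInnovationSolution a b c d φ x g) {T r : ℝ} (hT : 0 ≤ T)
    (hr0 : 0 < r) (hr1 : r < 1) (hr : (a + d - b - c) * r ≤ d - b)
    (hg : ∀ t, T ≤ t → 0 < g t) (hxT : x T ≤ r) {t : ℝ} (ht : T ≤ t) : x t ≤ r := by
  refine image_le_of_deriv_right_lt_deriv_boundary' (B := fun _ => r) (B' := 0)
    (hsol.continuousOn_state.mono fun u hu => hT.trans hu.1)
    (fun u hu => (hsol u (hT.trans hu.1)).1.hasDerivWithinAt) hxT continuousOn_const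
    (fun _ _ => hasDerivWithinAt_const _ _ _) (fun u hu hxu => ?_) ⟨ht, le_rfl⟩
  have hgr := mul_pos (hg u hu.1) hr0
  rw [hxu, Pi.zero_apply]
  exact mul_neg_of_pos_of_neg (mul_pos hr0 (sub_pos.2 hr1)) (by linarith)

theorem exists_state_lt (hsol : IsInnovationSolution a b c d φ x g) (hφ : Continuous φ)
    (hac : c < a) (hdb : b < d) (hφpos : ∀ y, (d - b) / (a + d - b - c) ≤ y → y ≤ 1 → 0 < φ y)
    (hx0 : x 0 ∈ Ico 0 1) (hg0 : 0 < g 0) :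
    ∃ T, 0 ≤ T ∧ x T < (d - b) / (a + d - b - c) := by
  set s := a + d - b - c
  have hs : 0 < s := by linarith
  have hxs : 0 < (d - b) / s := div_pos (by linarith) hs
  by_contra! hx
  obtain ⟨z, hz, hmin⟩ := isCompact_Icc.exists_isMinOn
    (nonempty_Icc.2 ((div_le_one hs).2 (by linarith : d - b ≤ s))) hφ.continuousOn
  have hgain : Tendsto g atTop atTop :=
    tendsto_atTop_of_hasDerivAt_mul (hφ.comp_continuousOn hsol.continuousOn_state)
      (fun t ht => (hsol t ht).2) hg0 (hφpos z hz.1 hz.2)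
      fun t ht => hmin ⟨hx t ht, (hsol.state_lt_one hx0.2 ht).le⟩
  obtain ⟨T, hT⟩ := eventually_atTop.1 (hgain.eventually_ge_atTop s)
  have hxc := hsol.continuousOn_state.mono (Ici_subset_Ici.2 (le_max_right T 0))
  have hgc := hsol.continuousOn_gain.mono (Ici_subset_Ici.2 (le_max_right T 0))
  -- once `g ≥ s`, the rate of `1 - x` is `x ((d - b) + (g - s) x) ≥ x (d - b)`
  have hy : Tendsto (fun t => 1 - x t) atTop atTop := by
    refine tendsto_atTop_of_hasDerivAt_mul (a := max T 0) (by fun_prop)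
      (fun t ht => hsol.hasDerivAt_one_sub_state (le_of_max_le_right ht))
      (sub_pos.2 (hsol.state_lt_one hx0.2 (le_max_right _ _)))
      (mul_pos hxs (sub_pos.2 hdb)) fun t ht => ?_
    have hxt := hx t (le_of_max_le_right ht)
    have hgt := hT t (le_of_max_le_left ht)
    nlinarith [mul_nonneg (sub_nonneg.2 hgt) (hxs.le.trans hxt)]
  obtain ⟨t, ht1, ht0⟩ := (hy.eventually_gt_atTop 1 |>.and (eventually_ge_atTop 0)).exists
  linarith [hsol.state_nonneg hx0.1 ht0]

theorem tendsto_state_zero (hsol : IsInnovationSolution a b c d φ x g) (hφ : Continuous φ)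
    (hac : c < a) (hdb : b < d) (hφpos : ∀ y, (d - b) / (a + d - b - c) ≤ y → y ≤ 1 → 0 < φ y)
    (hx0 : x 0 ∈ Ico 0 1) (hg0 : 0 < g 0) : Tendsto x atTop (𝓝 0) := by
  obtain ⟨T, hT, hxT⟩ := hsol.exists_state_lt hφ hac hdb hφpos hx0 hg0
  set s := a + d - b - c
  have hs : 0 < s := by linarith
  have hxT0 := hsol.state_nonneg hx0.1 hT
  obtain ⟨r, hxTr, hrxs⟩ := exists_between hxT
  have hr0 : 0 < r := hxT0.trans_lt hxTr
  have hsr : s * r < d - b := by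
    rw [mul_comm, ← lt_div_iff₀ hs]; linarith
  have hr1 : r < 1 := by nlinarith
  -- below `r` the per-capita rate of `x` is at most `-(1 - r) (d - b - s r) < 0`
  have hle : ∀ t, T ≤ t → x t ≤ r := fun t ht => hsol.state_le_of_le hT hr0 hr1 hsr.le
    (fun u hu => hsol.gain_pos hφ hg0 (hT.trans hu)) hxTr.le ht
  have hxc := hsol.continuousOn_state.mono (Ici_subset_Ici.2 hT)
  have hgc := hsol.continuousOn_gain.mono (Ici_subset_Ici.2 hT)
  refine tendsto_zero_of_hasDerivAt_mul (a := T) (by fun_prop)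
    (fun t ht => hsol.hasDerivAt_state (hT.trans ht))
    (mul_pos (sub_pos.2 hr1) (sub_pos.2 hsr)) fun t ht => ?_
  have hxt := hle t ht
  have hxt0 := hsol.state_nonneg hx0.1 (hT.trans ht)
  have hgx := mul_nonneg (hsol.gain_pos hφ hg0 (hT.trans ht)).le hxt0
  nlinarith [mul_nonneg (sub_nonneg.2 hxt) (sub_pos.2 hsr).le, mul_le_mul_of_nonneg_left hxt hs.le]

end IsInnovationSolution

/-- Consensus reaching via the innovation-gain controller in a coordination game. -/
theorem consensus_reaching_innovation (a b c d δ : ℝ) (hac : a > c) (hdb : d > b)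
    (hδ0 : 0 < δ) (hδ : δ < (d - b) / (a + d - b - c))
    (φ : ℝ → ℝ) (hφ : ContDiff ℝ 1 φ)
    (h1 : ∀ y : ℝ, 0 ≤ y → y < δ → φ y < 0)
    (h2 : ∀ y : ℝ, δ < y → y ≤ 1 → 0 < φ y)
    (x g : ℝ → ℝ) (hsol : IsInnovationSolution a b c d φ x g)
    (hx0 : x 0 ∈ Set.Ico (0 : ℝ) 1) (hg0 : 0 < g 0) :
    Filter.Tendsto x Filter.atTop (nhds 0) ∧
    Filter.Tendsto g Filter.atTop (nhds 0) := by
  have hφc := hφ.continuous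
  have hx := hsol.tendsto_state_zero hφc hac hdb (fun y hy => h2 y (hδ.trans_le hy)) hx0 hg0
  refine ⟨hx, ?_⟩
  have hφ0 : φ 0 < 0 := h1 0 le_rfl hδ0
  obtain ⟨T, hT⟩ := eventually_atTop.1 <|
    ((hφc.tendsto 0).comp hx).eventually_lt_const (by linarith : φ 0 < φ 0 / 2)
  exact tendsto_zero_of_hasDerivAt_mul (a := max T 0) (ε := -(φ 0 / 2))
    (hφc.comp_continuousOn (hsol.continuousOn_state.mono (Ici_subset_Ici.2 (le_max_right T 0))))
    (fun t ht => (hsol t (le_of_max_le_right ht)).2) (by linarith)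
    fun t ht => by rw [neg_neg]; exact (hT t (le_of_max_le_left ht)).le
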